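/- Let f(z) = 4z²/(z³-1) and σ_P(u) = -u/(1 + f(z₀)u), z₀³ ≠ 1, z₀ ≠ 0. The tangent line L_P = {w = 2z₀z - z₀²} meets the cubic C = {1 + w³ - 2zw = 0} in the three points with curve-parameters t = z₀, t = 1/√z₀, t = -1/√z₀ (under the parametrization t ↦ ((1+t³)/(2t²), 1/t)), and σ_P permutes the two points with parameters ±1/√z₀. -/

import Mathlib

/-!
Substituting the parametrization into the line and clearing `t²` gives
`z₀t³ - z₀²t² - t + z₀ = (t - z₀)(z₀t² - 1)`, whose roots are `z₀` and `±1/s`.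
The two points `±1/s` sit at `u = (1 ∓ s³)/(2s)` on `L_P`, and at `u = (1 - s³)/(2s)`
the denominator of `σ_P` collapses to `(1 - s³)/(1 + s³)`, so `σ_P` sends one to the other.
-/

/-- The parametrization `t ↦ ((1+t³)/(2t²), 1/t)` of the cubic `C = {1 + w³ - 2zw = 0}`;
this is its `z`-coordinate. -/
noncomputable def cubicZ (t : ℂ) : ℂ := (1 + t ^ 3) / (2 * t ^ 2)

theorem one_div_eq_two_mul_cubicZ_sub_sq_iff {z₀ t : ℂ} (ht : t ≠ 0) :
    1 / t = 2 * z₀ * cubicZ t - z₀ ^ 2 ↔ (t - z₀) * (z₀ * t ^ 2 - 1) = 0 := by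
  unfold cubicZ
  constructor <;> intro h
  · field_simp at h
    linear_combination -h
  · field_simp
    linear_combination -h

theorem mul_sq_sub_one_eq_zero_iff {s t : ℂ} (hs : s ≠ 0) :
    s ^ 2 * t ^ 2 - 1 = 0 ↔ t = 1 / s ∨ t = -(1 / s) := by
  rw [← sq_eq_sq_iff_eq_or_eq_neg, div_pow, one_pow, eq_div_iff (pow_ne_zero 2 hs), sub_eq_zero,
    mul_comm]

theorem cubicZ_one_div_sub_sq {s : ℂ} (hs : s ≠ 0) :
    cubicZ (1 / s) - s ^ 2 = (1 - s ^ 3) / (2 * s) := by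
  unfold cubicZ
  field_simp
  ring

theorem cubicZ_neg_one_div_sub_sq {s : ℂ} (hs : s ≠ 0) :
    cubicZ (-(1 / s)) - s ^ 2 = -((1 + s ^ 3) / (2 * s)) := by
  have h := cubicZ_one_div_sub_sq (neg_ne_zero.mpr hs)
  rw [one_div_neg_eq_neg_one_div, neg_sq] at h
  rw [h]
  ring

/-- The paper's `σ_P` in the coordinate `u = z - z₀` on `L_P`, with `f(z₀) = 4z₀²/(z₀³-1)`. -/
noncomputable def sigmaP (z₀ u : ℂ) : ℂ := -u / (1 + 4 * z₀ ^ 2 / (z₀ ^ 3 - 1) * u)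

theorem sigmaP_sq_one_sub_pow_three_div {s : ℂ} (hs : s ≠ 0) (h6 : (s ^ 2) ^ 3 ≠ 1) :
    sigmaP (s ^ 2) ((1 - s ^ 3) / (2 * s)) = -((1 + s ^ 3) / (2 * s)) := by
  have hfac : (s ^ 2) ^ 3 - 1 = -((1 - s ^ 3) * (1 + s ^ 3)) := by ring
  have hm : 1 - s ^ 3 ≠ 0 := fun h => h6 (by linear_combination -(1 + s ^ 3) * h)
  have hp : 1 + s ^ 3 ≠ 0 := fun h => h6 (by linear_combination -(1 - s ^ 3) * h)
  have hden : 1 + 4 * (s ^ 2) ^ 2 / ((s ^ 2) ^ 3 - 1) * ((1 - s ^ 3) / (2 * s))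
      = (1 - s ^ 3) / (1 + s ^ 3) := by
    rw [hfac]
    field_simp
    ring
  rw [sigmaP, hden]
  field_simp

theorem tangent_meets_cubic_general (z₀ s : ℂ) (hz1 : z₀ ^ 3 ≠ 1)
    (hs : s ^ 2 = z₀) (hs0 : s ≠ 0) :
    (∀ t : ℂ, t ≠ 0 →
      (1 / t = 2 * z₀ * cubicZ t - z₀ ^ 2 ↔ t = z₀ ∨ t = 1 / s ∨ t = -(1 / s))) ∧
    -(cubicZ (1 / s) - z₀) /
        (1 + (4 * z₀ ^ 2 / (z₀ ^ 3 - 1)) * (cubicZ (1 / s) - z₀))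
      = cubicZ (-(1 / s)) - z₀ := by
  subst hs
  refine ⟨fun t ht => ?_, ?_⟩
  · rw [one_div_eq_two_mul_cubicZ_sub_sq_iff ht, mul_eq_zero, sub_eq_zero,
      mul_sq_sub_one_eq_zero_iff hs0]
  · rw [cubicZ_neg_one_div_sub_sq hs0, ← sigmaP_sq_one_sub_pow_three_div hs0 hz1,
      ← cubicZ_one_div_sub_sq hs0]
    rfl

/-- let `f(z) = 4z²/(z³-1)` and `σ_P(u) = -u/(1 + f(z₀)u)`, with `z₀ ≠ 0`,
`z₀³ ≠ 1`, and let `s` be a fixed square root of `z₀`. The tangent line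
`L_P = {w = 2z₀z - z₀²}` to the parabola at `P = (z₀, z₀²)` meets the cubic
`C = {1 + w³ - 2zw = 0}` in exactly the three points with curve-parameters `t = z₀`,
`t = 1/s`, `t = -1/s` (under the parametrization `t ↦ ((1+t³)/(2t²), 1/t)`), and `σ_P`
permutes the two points with parameters `±1/s`. -/
theorem tangent_meets_cubic (z₀ s : ℂ) (hz0 : z₀ ≠ 0) (hz1 : z₀ ^ 3 ≠ 1)
    (hs : s ^ 2 = z₀) (hs0 : s ≠ 0) :
    (∀ t : ℂ, t ≠ 0 →
      (1 / t = 2 * z₀ * cubicZ t - z₀ ^ 2 ↔ t = z₀ ∨ t = 1 / s ∨ t = -(1 / s))) ∧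
    -(cubicZ (1 / s) - z₀) /
        (1 + (4 * z₀ ^ 2 / (z₀ ^ 3 - 1)) * (cubicZ (1 / s) - z₀))
      = cubicZ (-(1 / s)) - z₀ :=
  tangent_meets_cubic_general z₀ s hz1 hs hs0
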